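/- arXiv:2212.07354 — 3 statements merged into one kernel-verified Lean document; each statement's English description precedes it below -/
import Mathlib

section
/- Let μ_ℓ, μ be Radon measures on an open set O ⊆ ℝ^m with μ_ℓ → μ weakly* (i.e., ∫φ dμ_ℓ → ∫φ dμ for all φ ∈ C⁰_c(O)), and let f_ℓ ∈ L¹_loc(μ_ℓ), f ∈ L¹_loc(μ) satisfy f_ℓ μ_ℓ → f μ weakly* as signed measures. Suppose q > 1 and sup_ℓ ∫_K |f_ℓ|^q dμ_ℓ < ∞ for every compact K ⊆ O. Then for every open A with compact closure in O, ∫_A |f|^q dμ ≤ liminf_{ℓ→∞} ∫_A |f_ℓ|^q dμ_ℓ. -/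
open MeasureTheory Filter Topology Metric
open scoped ENNReal NNReal

noncomputable def trunc (q N : ℝ) (x : ℝ) : ℝ :=
  if x ≤ 0 then -(min (-x) N ^ (q - 1)) else min x N ^ (q - 1)

lemma young_step {X : Type*} [MeasurableSpace X] [TopologicalSpace X] [T2Space X]
    [OpensMeasurableSpace X] [SecondCountableTopology X] {ν : Measure X} [IsFiniteMeasureOnCompacts ν] {g : X → ℝ}
    (hg : LocallyIntegrable g ν) {q p : ℝ} (hpq : q.HolderConjugate p) {A : Set X}
    {φ : X → ℝ} (hφc : Continuous φ) (hφs : HasCompactSupport φ) (hφA : tsupport φ ⊆ A)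
    (hfin : ∫⁻ z in A, ENNReal.ofReal (|g z| ^ q) ∂ν ≠ ⊤) :
    ∫ z, g z * φ z ∂ν
      ≤ (∫⁻ z in A, ENNReal.ofReal (|g z| ^ q) ∂ν).toReal / q + (1 / p) * ∫ z, |φ z| ^ p ∂ν := by
  have hq0 : 0 < q := hpq.pos
  have hp0 : 0 < p := hpq.symm.pos
  have hInt1 : Integrable (fun z => g z * φ z) ν := by
    simpa [smul_eq_mul] using hg.integrable_smul_right_of_hasCompactSupport hφc hφs
  have habsq_meas : AEStronglyMeasurable (fun z => |g z| ^ q) (ν.restrict A) := by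
    exact ((Real.continuous_rpow_const hq0.le).comp continuous_abs).comp_aestronglyMeasurable
      hg.aestronglyMeasurable.restrict
  have hnonneg : 0 ≤ᵐ[ν.restrict A] fun z => |g z| ^ q :=
    Eventually.of_forall fun z => Real.rpow_nonneg (abs_nonneg _) _
  have hIntq : IntegrableOn (fun z => |g z| ^ q) A ν := by
    refine ⟨habsq_meas, ?_⟩
    rw [hasFiniteIntegral_iff_ofReal hnonneg]
    exact hfin.lt_top
  have hφp_supp : HasCompactSupport (fun z => |φ z| ^ p) := by
    refine HasCompactSupport.comp_left (g := fun x : ℝ => |x| ^ p) hφs ?_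
    simp [Real.zero_rpow hp0.ne']
  have hφp_cont : Continuous fun z => |φ z| ^ p :=
    (Real.continuous_rpow_const hp0.le).comp (continuous_abs.comp hφc)
  have hIntp : Integrable (fun z => |φ z| ^ p) ν :=
    hφp_cont.integrable_of_hasCompactSupport hφp_supp
  have hzero : ∀ x, x ∉ A → φ x = 0 := fun x hx =>
    image_eq_zero_of_notMem_tsupport fun h => hx (hφA h)
  have step1 : ∫ z, g z * φ z ∂ν = ∫ z in A, g z * φ z ∂ν :=
    (setIntegral_eq_integral_of_forall_compl_eq_zero fun x hx => by
      rw [hzero x hx, mul_zero]).symm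
  have step2 : ∫ z in A, g z * φ z ∂ν
      ≤ ∫ z in A, (|g z| ^ q / q + |φ z| ^ p / p) ∂ν := by
    refine integral_mono hInt1.integrableOn ((hIntq.div_const q).add
      (hIntp.integrableOn.div_const p)) fun z => ?_
    exact Real.young_inequality _ _ hpq
  have step3 : ∫ z in A, (|g z| ^ q / q + |φ z| ^ p / p) ∂ν
      = (∫ z in A, |g z| ^ q ∂ν) / q + (∫ z in A, |φ z| ^ p ∂ν) / p := by
    rw [integral_add (hIntq.div_const q) (hIntp.integrableOn.div_const p),
      integral_div, integral_div]
  have step4 : ∫ z in A, |g z| ^ q ∂ν = (∫⁻ z in A, ENNReal.ofReal (|g z| ^ q) ∂ν).toReal := by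
    rw [integral_eq_lintegral_of_nonneg_ae hnonneg habsq_meas]
  have step5 : ∫ z in A, |φ z| ^ p ∂ν = ∫ z, |φ z| ^ p ∂ν :=
    setIntegral_eq_integral_of_forall_compl_eq_zero fun x hx => by
      rw [hzero x hx, abs_zero, Real.zero_rpow hp0.ne']
  rw [step1]
  refine le_trans step2 ?_
  rw [step3, step4, step5]
  apply le_of_eq
  ring



lemma trunc_continuous {q N : ℝ} (hq : 1 < q) (hN : 0 ≤ N) : Continuous (trunc q N) := by
  have h1 : (0:ℝ) ≤ q - 1 := by linarith
  apply Continuous.if_le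
  · exact ((continuous_neg.min continuous_const).rpow_const fun x => Or.inr h1).neg
  · exact (continuous_id.min continuous_const).rpow_const fun x => Or.inr h1
  · exact continuous_id
  · exact continuous_const
  · intro x hx
    subst hx
    rw [neg_zero, min_eq_left hN, Real.zero_rpow (by linarith), neg_zero]

lemma trunc_abs_eq {q N : ℝ} (hq : 1 < q) (hN : 0 ≤ N) (x : ℝ) :
    |trunc q N x| = min |x| N ^ (q - 1) := by
  unfold trunc
  rcases le_or_gt x 0 with h | h
  · rw [if_pos h, abs_neg, abs_of_nonneg (Real.rpow_nonneg (le_min (by linarith) hN) _),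
      abs_of_nonpos h]
  · rw [if_neg (not_le.2 h), abs_of_nonneg (Real.rpow_nonneg (le_min h.le hN) _),
      abs_of_pos h]

lemma trunc_abs_le {q N : ℝ} (hq : 1 < q) (hN : 0 ≤ N) (x : ℝ) :
    |trunc q N x| ≤ N ^ (q - 1) := by
  rw [trunc_abs_eq hq hN]
  exact Real.rpow_le_rpow (le_min (abs_nonneg x) hN) (min_le_right _ _) (by linarith)

lemma trunc_mul_ge {q N : ℝ} (hq : 1 < q) (hN : 0 ≤ N) (x : ℝ) :
    min |x| N ^ q ≤ x * trunc q N x := by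
  have hmin : (0:ℝ) ≤ min |x| N := le_min (abs_nonneg x) hN
  have hsplit : min |x| N ^ q = min |x| N * min |x| N ^ (q - 1) := by
    have := Real.rpow_add_of_nonneg hmin (y := 1) (z := q - 1) zero_le_one (by linarith)
    rw [add_sub_cancel] at this
    rw [this, Real.rpow_one]
  rw [hsplit]
  unfold trunc
  rcases le_or_gt x 0 with h | h
  · rw [if_pos h, mul_neg, ← neg_mul, abs_of_nonpos h]
    exact mul_le_mul_of_nonneg_right (min_le_left _ _)
      (Real.rpow_nonneg (le_min (by linarith) hN) _)
  · rw [if_neg (not_le.2 h), abs_of_pos h]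
    exact mul_le_mul_of_nonneg_right (min_le_left _ _)
      (Real.rpow_nonneg (le_min h.le hN) _)

lemma trunc_rpow {q p N : ℝ} (hpq : q.HolderConjugate p) (hN : 0 ≤ N) (x : ℝ) :
    |trunc q N x| ^ p = min |x| N ^ q := by
  rw [trunc_abs_eq hpq.lt hN, ← Real.rpow_mul (le_min (abs_nonneg x) hN),
    hpq.sub_one_mul_conj]

/-- lower semicontinuity of L^q norms (q > 1) of measure-function pairs
under weak* convergence. -/
theorem stmt5 {m : ℕ} (O : Set (EuclideanSpace ℝ (Fin m))) (hO : IsOpen O)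
    (μseq : ℕ → Measure (EuclideanSpace ℝ (Fin m)))
    (μ : Measure (EuclideanSpace ℝ (Fin m)))
    [∀ ℓ, IsFiniteMeasureOnCompacts (μseq ℓ)] [IsFiniteMeasureOnCompacts μ]
    (hweak : ∀ φ : EuclideanSpace ℝ (Fin m) → ℝ, Continuous φ → HasCompactSupport φ →
      tsupport φ ⊆ O →
      Tendsto (fun ℓ => ∫ z, φ z ∂(μseq ℓ)) atTop (𝓝 (∫ z, φ z ∂μ)))
    (f : ℕ → EuclideanSpace ℝ (Fin m) → ℝ) (flim : EuclideanSpace ℝ (Fin m) → ℝ)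
    (hfmeas : ∀ ℓ, LocallyIntegrable (f ℓ) (μseq ℓ)) (hflim : LocallyIntegrable flim μ)
    (hfweak : ∀ φ : EuclideanSpace ℝ (Fin m) → ℝ, Continuous φ → HasCompactSupport φ →
      tsupport φ ⊆ O →
      Tendsto (fun ℓ => ∫ z, f ℓ z * φ z ∂(μseq ℓ)) atTop (𝓝 (∫ z, flim z * φ z ∂μ)))
    (q : ℝ) (hq : 1 < q)
    (hbound : ∀ K : Set (EuclideanSpace ℝ (Fin m)), K ⊆ O → IsCompact K →
      ∃ C : ℝ≥0∞, C < ⊤ ∧ ∀ ℓ, ∫⁻ z in K, ENNReal.ofReal (|f ℓ z| ^ q) ∂(μseq ℓ) ≤ C)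
    (A : Set (EuclideanSpace ℝ (Fin m))) (hA : IsOpen A) (hAc : IsCompact (closure A))
    (hAO : closure A ⊆ O) :
    ∫⁻ z in A, ENNReal.ofReal (|flim z| ^ q) ∂μ
      ≤ atTop.liminf (fun ℓ => ∫⁻ z in A, ENNReal.ofReal (|f ℓ z| ^ q) ∂(μseq ℓ)) := by
  have hq0 : (0:ℝ) < q := lt_trans one_pos hq
  set p := q / (q - 1) with hp_def
  have hpq : q.HolderConjugate p := Real.HolderConjugate.conjExponent hq
  have hp0 : 0 < p := hpq.symm.pos
  have hp1 : 1 ≤ p := hpq.symm.lt.le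
  obtain ⟨C, hC, hCb⟩ := hbound (closure A) hAO hAc
  set I : ℕ → ℝ≥0∞ := fun ℓ => ∫⁻ z in A, ENNReal.ofReal (|f ℓ z| ^ q) ∂(μseq ℓ) with hI
  have hIC : ∀ ℓ, I ℓ ≤ C := fun ℓ =>
    le_trans (lintegral_mono_set subset_closure) (hCb ℓ)
  set L : ℝ≥0∞ := atTop.liminf I with hLdef
  have hLC : L ≤ C := liminf_le_of_frequently_le (Frequently.of_forall hIC)
  have hLtop : L ≠ ⊤ := (lt_of_le_of_lt hLC hC).ne
  set Lr : ℝ := L.toReal with hLr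
  show ∫⁻ z in A, ENNReal.ofReal (|flim z| ^ q) ∂μ ≤ L
  have hFasm := hflim.aestronglyMeasurable
  set F := hFasm.mk flim with hF
  have hFmeas : StronglyMeasurable F := hFasm.stronglyMeasurable_mk
  have hFae : flim =ᵐ[μ] F := hFasm.ae_eq_mk
  -- Step A
  have stepA : ∀ φ : EuclideanSpace ℝ (Fin m) → ℝ, Continuous φ → HasCompactSupport φ →
      tsupport φ ⊆ A →
      ∫ z, flim z * φ z ∂μ ≤ Lr / q + (1 / p) * ∫ z, |φ z| ^ p ∂μ := by
    intro φ hφc hφs hφA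
    have hφO : tsupport φ ⊆ O := hφA.trans (subset_closure.trans hAO)
    have hφp_supp : HasCompactSupport (fun z => |φ z| ^ p) := by
      refine HasCompactSupport.comp_left (g := fun x : ℝ => |x| ^ p) hφs ?_
      simp [Real.zero_rpow hp0.ne']
    have hφp_cont : Continuous (fun z => |φ z| ^ p) :=
      (Real.continuous_rpow_const hp0.le).comp (continuous_abs.comp hφc)
    have hφpO : tsupport (fun z => |φ z| ^ p) ⊆ O := by
      refine subset_trans ?_ hφO
      apply closure_mono
      intro x hx
      simp only [Function.mem_support] at hx ⊢
      intro h
      exact hx (by rw [h]; simp [Real.zero_rpow hp0.ne'])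
    have ha := hfweak φ hφc hφs hφO
    have hb := hweak _ hφp_cont hφp_supp hφpO
    have key : ∀ ℓ, ∫ z, f ℓ z * φ z ∂(μseq ℓ)
        ≤ (I ℓ).toReal / q + (1 / p) * ∫ z, |φ z| ^ p ∂(μseq ℓ) := fun ℓ =>
      young_step (hfmeas ℓ) hpq hφc hφs hφA ((hIC ℓ).trans_lt hC).ne
    refine le_of_forall_pos_le_add ?_
    intro ε hε
    set δ := ε / 3 with hδ
    have hδ0 : 0 < δ := by positivity
    have hfreq : ∃ᶠ ℓ in atTop, I ℓ < L + ENNReal.ofReal δ := by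
      apply frequently_lt_of_liminf_lt (by isBoundedDefault)
      exact ENNReal.lt_add_right hLtop (ENNReal.ofReal_pos.2 hδ0).ne'
    have hev1 : ∀ᶠ ℓ in atTop, |∫ z, f ℓ z * φ z ∂(μseq ℓ) - ∫ z, flim z * φ z ∂μ| < δ := by
      have := Metric.tendsto_nhds.mp ha δ hδ0
      simpa [Real.dist_eq] using this
    have hev2 : ∀ᶠ ℓ in atTop, |∫ z, |φ z| ^ p ∂(μseq ℓ) - ∫ z, |φ z| ^ p ∂μ| < δ := by
      have := Metric.tendsto_nhds.mp hb δ hδ0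
      simpa [Real.dist_eq] using this
    obtain ⟨ℓ, hl1, hl2, hl3⟩ := (hfreq.and_eventually (hev1.and hev2)).exists
    have hItoReal : (I ℓ).toReal ≤ Lr + δ := by
      have h1 : I ℓ ≤ L + ENNReal.ofReal δ := hl1.le
      calc (I ℓ).toReal ≤ (L + ENNReal.ofReal δ).toReal :=
            ENNReal.toReal_mono (ENNReal.add_ne_top.2 ⟨hLtop, ENNReal.ofReal_ne_top⟩) h1
        _ = Lr + δ := by
            rw [ENNReal.toReal_add hLtop ENNReal.ofReal_ne_top, ENNReal.toReal_ofReal hδ0.le]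
    have h2 := abs_lt.1 hl2
    have h3 := abs_lt.1 hl3
    have hkey := key ℓ
    have hq1 : 1 ≤ q := hq.le
    have hinvq : 1 / q ≤ 1 := by
      rw [div_le_one hq0]; exact hq1
    have hinvp : 1 / p ≤ 1 := by
      rw [div_le_one hp0]; exact hp1
    have e1 : (I ℓ).toReal / q ≤ Lr / q + δ := by
      calc (I ℓ).toReal / q ≤ (Lr + δ) / q := by
            apply div_le_div_of_nonneg_right hItoReal hq0.le
        _ = Lr / q + δ / q := by ring
        _ ≤ Lr / q + δ := by
            have : δ / q ≤ δ := by
              apply div_le_self hδ0.le hq1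
            linarith
    have e2 : (1 / p) * ∫ z, |φ z| ^ p ∂(μseq ℓ)
        ≤ (1 / p) * ∫ z, |φ z| ^ p ∂μ + δ := by
      have hb2 : ∫ z, |φ z| ^ p ∂(μseq ℓ) ≤ ∫ z, |φ z| ^ p ∂μ + δ := by linarith
      calc (1 / p) * ∫ z, |φ z| ^ p ∂(μseq ℓ) ≤ (1 / p) * (∫ z, |φ z| ^ p ∂μ + δ) := by
            apply mul_le_mul_of_nonneg_left hb2 (by positivity)
        _ = (1 / p) * ∫ z, |φ z| ^ p ∂μ + (1 / p) * δ := by ring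
        _ ≤ (1 / p) * ∫ z, |φ z| ^ p ∂μ + δ := by nlinarith
    have : ∫ z, flim z * φ z ∂μ < ∫ z, f ℓ z * φ z ∂(μseq ℓ) + δ := by linarith
    have hfin : ∫ z, flim z * φ z ∂μ ≤ Lr / q + (1 / p) * ∫ z, |φ z| ^ p ∂μ + 3 * δ := by
      linarith
    calc ∫ z, flim z * φ z ∂μ ≤ Lr / q + (1 / p) * ∫ z, |φ z| ^ p ∂μ + 3 * δ := hfin
      _ = Lr / q + (1 / p) * ∫ z, |φ z| ^ p ∂μ + ε := by rw [hδ]; ring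
  -- Step B
  have stepB : ∀ (g : EuclideanSpace ℝ (Fin m) → ℝ) (M : ℝ), 0 ≤ M → Measurable g →
      (∀ z, |g z| ≤ M) → ∀ K : Set (EuclideanSpace ℝ (Fin m)), IsCompact K → K ⊆ A →
      (∀ z, z ∉ K → g z = 0) →
      ∫ z, flim z * g z ∂μ ≤ Lr / q + (1 / p) * ∫ z, |g z| ^ p ∂μ := by
    intro g M hM hgmeas hgbd K hK hKA hgK
    obtain ⟨χ, hχsupp, hχ1, hχbd⟩ :=
      exists_tsupport_one_of_isOpen_isClosed hA hAc hK.isClosed hKA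
    have hgsupp : Function.support g ⊆ K := Function.support_subset_iff'.2 hgK
    have hgOn : IntegrableOn g K μ :=
      Measure.integrableOn_of_bounded hK.measure_lt_top.ne hgmeas.aestronglyMeasurable
        (Eventually.of_forall fun z => by simpa using hgbd z)
    have hgint : Integrable g μ := by
      have := hgOn.integrable_indicator hK.measurableSet
      rwa [Set.indicator_eq_self.2 hgsupp] at this
    have hgmem : MemLp g 1 μ := memLp_one_iff_integrable.2 hgint
    have hψ : ∀ n : ℕ, ∃ ψ : EuclideanSpace ℝ (Fin m) → ℝ, HasCompactSupport ψ ∧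
        eLpNorm (g - ψ) 1 μ ≤ ((n : ℝ≥0∞) + 1)⁻¹ ∧ Continuous ψ := by
      intro n
      obtain ⟨ψ, h1, h2, h3, _⟩ := hgmem.exists_hasCompactSupport_eLpNorm_sub_le
        (p := 1) ENNReal.one_ne_top (ε := ((n : ℝ≥0∞) + 1)⁻¹)
        (by simp [ENNReal.inv_ne_zero])
      exact ⟨ψ, h1, h2, h3⟩
    choose ψ hψs hψe hψc using hψ
    have htm : TendstoInMeasure μ ψ atTop g := by
      apply tendstoInMeasure_of_tendsto_eLpNorm (p := 1) one_ne_zero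
        (fun n => (hψc n).aestronglyMeasurable) hgmeas.aestronglyMeasurable
      have h0 : Tendsto (fun n : ℕ => ((n : ℝ≥0∞) + 1)⁻¹) atTop (𝓝 0) := by
        have h := ENNReal.tendsto_inv_nat_nhds_zero.comp (tendsto_add_atTop_nat 1)
        have heq : ((fun n : ℕ => ((n : ℝ≥0∞))⁻¹) ∘ fun a => a + 1)
            = fun n : ℕ => ((n : ℝ≥0∞) + 1)⁻¹ := by
          funext n; simp [Function.comp]
        rwa [heq] at h
      refine tendsto_of_tendsto_of_tendsto_of_le_of_le tendsto_const_nhds h0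
        (fun n => zero_le) (fun n => ?_)
      rw [eLpNorm_sub_comm]
      exact hψe n
    obtain ⟨ns, hns_mono, hae⟩ := htm.exists_seq_tendsto_ae
    set clamp : ℝ → ℝ := fun x => max (-M) (min M x) with hclamp_def
    have hclamp_cont : Continuous clamp :=
      continuous_const.max (continuous_const.min continuous_id)
    set φ : ℕ → EuclideanSpace ℝ (Fin m) → ℝ := fun i z => χ z * clamp (ψ (ns i) z) with hφdef
    have hφcont : ∀ i, Continuous (φ i) := fun i =>
      χ.continuous.mul (hclamp_cont.comp (hψc (ns i)))
    have hφA : ∀ i, tsupport (φ i) ⊆ A := by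
      intro i
      refine subset_trans ?_ hχsupp
      apply closure_mono
      intro z hz
      simp only [Function.mem_support] at hz ⊢
      intro h
      exact hz (by rw [hφdef]; simp [h])
    have hφsupp : ∀ i, HasCompactSupport (φ i) := fun i =>
      hAc.of_isClosed_subset isClosed_closure ((hφA i).trans subset_closure)
    have hclamp_bd : ∀ x, |clamp x| ≤ M := by
      intro x
      rw [abs_le]
      constructor
      · exact le_max_left _ _
      · exact max_le (by linarith) (min_le_left _ _)
    have hχ01 : ∀ z, |χ z| ≤ 1 := by
      intro z
      rcases hχbd z with ⟨h0, h1⟩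
      rw [abs_of_nonneg h0]; exact h1
    have hφbd : ∀ i z, |φ i z| ≤ M := by
      intro i z
      rw [hφdef]
      simp only []
      rw [abs_mul]
      calc |χ z| * |clamp (ψ (ns i) z)| ≤ 1 * M :=
            mul_le_mul (hχ01 z) (hclamp_bd _) (abs_nonneg _) zero_le_one
        _ = M := one_mul M
    have hclamp_g : ∀ z, χ z * clamp (g z) = g z := by
      intro z
      by_cases hzK : z ∈ K
      · rw [hχ1 hzK]
        simp only [Pi.one_apply, one_mul, hclamp_def]
        have h1 := abs_le.1 (hgbd z)
        rw [min_eq_right h1.2, max_eq_right h1.1]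
      · rw [hgK z hzK]
        simp [hclamp_def, min_eq_right hM, max_eq_right (neg_nonpos.2 hM)]
    have hlim : ∀ᵐ z ∂μ, Tendsto (fun i => φ i z) atTop (𝓝 (g z)) := by
      filter_upwards [hae] with z hz
      have hcl : Tendsto (fun i => χ z * clamp (ψ (ns i) z)) atTop
          (𝓝 (χ z * clamp (g z))) :=
        (((hclamp_cont.tendsto _).comp hz).const_mul _)
      rw [← hclamp_g z]
      exact hcl
    set K' := tsupport (χ : EuclideanSpace ℝ (Fin m) → ℝ) with hK'def
    have hK'c : IsCompact K' := hAc.of_isClosed_subset isClosed_closure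
      (hχsupp.trans subset_closure)
    have hK'm : MeasurableSet K' := hK'c.isClosed.measurableSet
    have hφzero : ∀ i z, z ∉ K' → φ i z = 0 := by
      intro i z hz
      have : χ z = 0 := image_eq_zero_of_notMem_tsupport hz
      rw [hφdef]; simp [this]
    have h1 : Tendsto (fun i => ∫ z, flim z * φ i z ∂μ) atTop (𝓝 (∫ z, flim z * g z ∂μ)) := by
      apply tendsto_integral_of_dominated_convergence
        (K'.indicator fun z => M * |flim z|)
      · exact fun i => hflim.aestronglyMeasurable.mul (hφcont i).aestronglyMeasurable
      · exact IntegrableOn.integrable_indicator (((hflim.integrableOn_isCompact hK'c).abs).const_mul M) hK'm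
      · intro i
        refine Eventually.of_forall fun z => ?_
        by_cases hz : z ∈ K'
        · rw [Set.indicator_of_mem hz]
          rw [Real.norm_eq_abs, abs_mul]
          calc |flim z| * |φ i z| ≤ |flim z| * M :=
                mul_le_mul_of_nonneg_left (hφbd i z) (abs_nonneg _)
            _ = M * |flim z| := mul_comm _ _
        · rw [Set.indicator_of_notMem hz, hφzero i z hz, mul_zero, norm_zero]
      · filter_upwards [hlim] with z hz
        exact hz.const_mul _
    have h2 : Tendsto (fun i => ∫ z, |φ i z| ^ p ∂μ) atTop (𝓝 (∫ z, |g z| ^ p ∂μ)) := by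
      apply tendsto_integral_of_dominated_convergence (K'.indicator fun _ => M ^ p)
      · intro i
        exact ((Real.continuous_rpow_const hp0.le).comp
          (continuous_abs.comp (hφcont i))).aestronglyMeasurable
      · exact (integrableOn_const hK'c.measure_lt_top.ne).integrable_indicator hK'm
      · intro i
        refine Eventually.of_forall fun z => ?_
        by_cases hz : z ∈ K'
        · rw [Set.indicator_of_mem hz, Real.norm_eq_abs,
            abs_of_nonneg (Real.rpow_nonneg (abs_nonneg _) _)]
          exact Real.rpow_le_rpow (abs_nonneg _) (hφbd i z) hp0.le
        · rw [Set.indicator_of_notMem hz, hφzero i z hz]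
          simp [Real.zero_rpow hp0.ne']
      · filter_upwards [hlim] with z hz
        exact ((Real.continuous_rpow_const hp0.le).tendsto _).comp
          ((continuous_abs.tendsto _).comp hz)
    have h3 : ∀ i, ∫ z, flim z * φ i z ∂μ ≤ Lr / q + (1 / p) * ∫ z, |φ i z| ^ p ∂μ :=
      fun i => stepA _ (hφcont i) (hφsupp i) (hφA i)
    exact le_of_tendsto_of_tendsto' h1 ((h2.const_mul (1 / p)).const_add (Lr / q)) h3
  -- Step C
  have stepC : ∀ (N : ℕ) (K : Set (EuclideanSpace ℝ (Fin m))), IsCompact K → K ⊆ A →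
      ∫⁻ z in K, ENNReal.ofReal (min |F z| (N : ℝ) ^ q) ∂μ ≤ L := by
    intro N K hK hKA
    set Nr : ℝ := (N : ℝ) with hNr
    have hN : 0 ≤ Nr := Nat.cast_nonneg N
    have hNq : 0 ≤ Nr ^ (q - 1) := Real.rpow_nonneg hN _
    set g : EuclideanSpace ℝ (Fin m) → ℝ :=
      fun z => K.indicator (fun z => trunc q Nr (F z)) z with hgdef
    have hgmeas : Measurable g :=
      (((trunc_continuous hq hN).measurable).comp hFmeas.measurable).indicator hK.measurableSet
    have hgbd : ∀ z, |g z| ≤ Nr ^ (q - 1) := by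
      intro z
      by_cases hz : z ∈ K
      · simp only [hgdef, Set.indicator_of_mem hz]; exact trunc_abs_le hq hN _
      · simp only [hgdef, Set.indicator_of_notMem hz]; simpa using hNq
    have hgK : ∀ z, z ∉ K → g z = 0 := fun z hz => Set.indicator_of_notMem hz _
    have hB := stepB g (Nr ^ (q - 1)) hNq hgmeas hgbd K hK hKA hgK
    set w : EuclideanSpace ℝ (Fin m) → ℝ := fun z => min |F z| Nr ^ q with hwdef
    have hwnn : ∀ z, 0 ≤ w z := fun z => Real.rpow_nonneg (le_min (abs_nonneg _) hN) _
    have hwbd : ∀ z, w z ≤ Nr ^ q := fun z =>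
      Real.rpow_le_rpow (le_min (abs_nonneg _) hN) (min_le_right _ _) hq0.le
    have hwmeas : Measurable w :=
      (Real.continuous_rpow_const hq0.le).measurable.comp
        (hFmeas.measurable.abs.min measurable_const)
    have hwint : IntegrableOn w K μ :=
      Measure.integrableOn_of_bounded hK.measure_lt_top.ne hwmeas.aestronglyMeasurable
        (Eventually.of_forall fun z => by
          rw [Real.norm_eq_abs, abs_of_nonneg (hwnn z)]; exact hwbd z)
    set J : ℝ := ∫ z in K, w z ∂μ with hJdef
    have hfg_int : Integrable (fun z => flim z * g z) μ := by
      refine Integrable.mono'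
        (IntegrableOn.integrable_indicator
          (((hflim.integrableOn_isCompact hK).abs).const_mul (Nr ^ (q - 1)))
          hK.measurableSet)
        (hflim.aestronglyMeasurable.mul hgmeas.aestronglyMeasurable)
        (Eventually.of_forall fun z => ?_)
      by_cases hz : z ∈ K
      · rw [Set.indicator_of_mem hz, Real.norm_eq_abs, abs_mul]
        calc |flim z| * |g z| ≤ |flim z| * Nr ^ (q - 1) :=
              mul_le_mul_of_nonneg_left (hgbd z) (abs_nonneg _)
          _ = Nr ^ (q - 1) * |flim z| := mul_comm _ _
      · rw [Set.indicator_of_notMem hz, hgK z hz, mul_zero, norm_zero]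
    have e1 : ∫ z, flim z * g z ∂μ = ∫ z, F z * g z ∂μ :=
      integral_congr_ae (hFae.mono fun z hz => by simp only [hz])
    have e2 : ∫ z, F z * g z ∂μ = ∫ z in K, F z * trunc q Nr (F z) ∂μ := by
      rw [← setIntegral_eq_integral_of_forall_compl_eq_zero
        (fun z hz => by rw [hgK z hz, mul_zero])]
      exact setIntegral_congr_fun hK.measurableSet fun z hz => by
        simp only [hgdef, Set.indicator_of_mem hz]
    have hFt_int : IntegrableOn (fun z => F z * trunc q Nr (F z)) K μ := by
      refine (hfg_int.integrableOn (s := K)).congr ?_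
      filter_upwards [ae_restrict_of_ae hFae, ae_restrict_mem hK.measurableSet] with z hz1 hz2
      simp only [hz1, hgdef, Set.indicator_of_mem hz2]
    have e3 : J ≤ ∫ z in K, F z * trunc q Nr (F z) ∂μ :=
      integral_mono hwint hFt_int fun z => trunc_mul_ge hq hN (F z)
    have e4 : ∫ z, |g z| ^ p ∂μ = J := by
      rw [hJdef, ← setIntegral_eq_integral_of_forall_compl_eq_zero
        (fun z hz => by rw [hgK z hz]; simp [Real.zero_rpow hp0.ne'])]
      exact setIntegral_congr_fun hK.measurableSet fun z hz => by
        simp only [hgdef, Set.indicator_of_mem hz]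
        rw [trunc_rpow hpq hN]
    have hcomb : J ≤ Lr / q + (1 / p) * J := by
      calc J ≤ ∫ z in K, F z * trunc q Nr (F z) ∂μ := e3
        _ = ∫ z, flim z * g z ∂μ := by rw [e1, e2]
        _ ≤ Lr / q + (1 / p) * ∫ z, |g z| ^ p ∂μ := hB
        _ = Lr / q + (1 / p) * J := by rw [e4]
    have hJL : J ≤ Lr := by
      have hinv : q⁻¹ + p⁻¹ = 1 := Real.HolderConjugate.inv_add_inv_eq_one hpq
      have h1 : J * (1 / q) ≤ Lr * (1 / q) := by
        have hpq1 : 1 - 1 / p = 1 / q := by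
          rw [one_div, one_div]; linarith
        have hexp : J * (1 / q) = J - 1 / p * J := by rw [← hpq1]; ring
        have hLrq : Lr * (1 / q) = Lr / q := by ring
        linarith [hcomb]
      exact le_of_mul_le_mul_right (by simpa [mul_comm] using h1) (by positivity : (0:ℝ) < 1 / q)
    have hwr : ∫⁻ z in K, ENNReal.ofReal (w z) ∂μ = ENNReal.ofReal J :=
      (ofReal_integral_eq_lintegral_ofReal hwint (Eventually.of_forall hwnn)).symm
    calc ∫⁻ z in K, ENNReal.ofReal (min |F z| (N : ℝ) ^ q) ∂μ = ENNReal.ofReal J := hwr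
      _ ≤ ENNReal.ofReal Lr := ENNReal.ofReal_le_ofReal hJL
      _ = L := ENNReal.ofReal_toReal hLtop
  -- exhaustion of A by compacts
  set Kj : ℕ → Set (EuclideanSpace ℝ (Fin m)) :=
    fun j => closure A ∩ {z | ((j : ℝ≥0∞) + 1)⁻¹ ≤ EMetric.infEdist z Aᶜ} with hKjdef
  have hKjclosed : ∀ j, IsClosed (Kj j) := fun j =>
    isClosed_closure.inter (isClosed_Ici.preimage EMetric.continuous_infEdist)
  have hKjA : ∀ j, Kj j ⊆ A := by
    intro j z hz
    have hpos : 0 < EMetric.infEdist z Aᶜ :=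
      lt_of_lt_of_le (ENNReal.inv_pos.2 (by simp)) hz.2
    have h2 := EMetric.infEdist_pos_iff_notMem_closure.1 hpos
    rw [hA.isClosed_compl.closure_eq] at h2
    simpa using h2
  have hKjcompact : ∀ j, IsCompact (Kj j) := fun j =>
    hAc.of_isClosed_subset (hKjclosed j) Set.inter_subset_left
  have hKjmono : Monotone Kj := by
    intro i j hij z hz
    refine ⟨hz.1, ?_⟩
    show ((j : ℝ≥0∞) + 1)⁻¹ ≤ EMetric.infEdist z Aᶜ
    refine le_trans (ENNReal.inv_le_inv.2 ?_) hz.2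
    exact add_le_add_left (by exact_mod_cast hij) 1
  have hKjunion : (⋃ j, Kj j) = A := by
    apply Set.Subset.antisymm
    · exact Set.iUnion_subset hKjA
    · intro z hz
      have h1 : z ∈ closure A := subset_closure hz
      have hpos : 0 < EMetric.infEdist z Aᶜ := by
        apply EMetric.infEdist_pos_iff_notMem_closure.2
        rw [hA.isClosed_compl.closure_eq]
        simpa using hz
      obtain ⟨j, hj⟩ := ENNReal.exists_inv_nat_lt hpos.ne'
      refine Set.mem_iUnion.2 ⟨j, h1, ?_⟩
      refine le_trans (ENNReal.inv_le_inv.2 ?_) hj.le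
      exact self_le_add_right _ _
  -- Step D
  have stepD1 : ∀ N : ℕ, ∫⁻ z in A, ENNReal.ofReal (min |F z| (N : ℝ) ^ q) ∂μ ≤ L := by
    intro N
    set h : EuclideanSpace ℝ (Fin m) → ℝ≥0∞ :=
      fun z => ENNReal.ofReal (min |F z| (N : ℝ) ^ q) with hhdef
    have hhmeas : Measurable h :=
      ((Real.continuous_rpow_const hq0.le).measurable.comp
        (hFmeas.measurable.abs.min measurable_const)).ennreal_ofReal
    have hKten : Tendsto (fun j => μ.withDensity h (Kj j)) atTop
        (𝓝 (μ.withDensity h (⋃ j, Kj j))) := tendsto_measure_iUnion_atTop hKjmono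
    rw [hKjunion] at hKten
    have hgoal : μ.withDensity h A ≤ L := by
      refine le_of_tendsto hKten (Eventually.of_forall fun j => ?_)
      rw [withDensity_apply h (hKjclosed j).measurableSet]
      exact stepC N _ (hKjcompact j) (hKjA j)
    rwa [withDensity_apply h hA.measurableSet] at hgoal
  have stepD2 : ∫⁻ z in A, ENNReal.ofReal (|F z| ^ q) ∂μ ≤ L := by
    have hmono : Monotone (fun N : ℕ => fun z : EuclideanSpace ℝ (Fin m) =>
        ENNReal.ofReal (min |F z| (N : ℝ) ^ q)) := by
      intro i j hij z
      apply ENNReal.ofReal_le_ofReal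
      exact Real.rpow_le_rpow (le_min (abs_nonneg _) (Nat.cast_nonneg _))
        (min_le_min le_rfl (Nat.cast_le.2 hij)) hq0.le
    have hsup : ∀ z : EuclideanSpace ℝ (Fin m),
        (⨆ N : ℕ, ENNReal.ofReal (min |F z| (N : ℝ) ^ q)) = ENNReal.ofReal (|F z| ^ q) := by
      intro z
      apply le_antisymm
      · refine iSup_le fun N => ENNReal.ofReal_le_ofReal ?_
        exact Real.rpow_le_rpow (le_min (abs_nonneg _) (Nat.cast_nonneg _))
          (min_le_left _ _) hq0.le
      · refine le_iSup_of_le ⌈|F z|⌉₊ ?_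
        rw [min_eq_left (Nat.le_ceil _)]
    calc ∫⁻ z in A, ENNReal.ofReal (|F z| ^ q) ∂μ
        = ∫⁻ z in A, ⨆ N : ℕ, ENNReal.ofReal (min |F z| (N : ℝ) ^ q) ∂μ :=
          lintegral_congr fun z => (hsup z).symm
      _ = ⨆ N : ℕ, ∫⁻ z in A, ENNReal.ofReal (min |F z| (N : ℝ) ^ q) ∂μ :=
          lintegral_iSup (fun N =>
            ((Real.continuous_rpow_const hq0.le).measurable.comp
              (hFmeas.measurable.abs.min measurable_const)).ennreal_ofReal) hmono
      _ ≤ L := iSup_le stepD1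
  have hfinal : ∫⁻ z in A, ENNReal.ofReal (|flim z| ^ q) ∂μ
      = ∫⁻ z in A, ENNReal.ofReal (|F z| ^ q) ∂μ :=
    lintegral_congr_ae ((ae_restrict_of_ae hFae).mono fun z hz => by simp only [hz])
  rw [hfinal]
  exact stepD2
end

section
/- Let μ be a Radon measure on ℝ^m with approximate tangent measure σ(z₀)ℋⁿ⌞Π at z₀ (σ(z₀) > 0), and let W ∈ L¹_loc(μ) with z₀ a Lebesgue point of W, i.e., (1/μ(B_r(z₀)))∫_{B_r(z₀)} |W − W(z₀)| dμ → 0. Let χ be a smooth radially symmetric bump on ℝ^m whose integral over every n-plane through the origin equals 1, and set χ_r(z) = r^{−n} χ((z − z₀)/r). Then ∫ (χ_r/σ(z₀)) W dμ → W(z₀) as r → 0. -/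
open MeasureTheory Filter Topology Metric
open scoped ENNReal NNReal

section Aux

variable {m : ℕ}

/-- The rescaled bump `z ↦ χ (r⁻¹ • (z - z₀))` has compact support for `r ≠ 0`. -/
lemma aux_hcs {χ : EuclideanSpace ℝ (Fin m) → ℝ} (hχsupp : HasCompactSupport χ)
    (z₀ : EuclideanSpace ℝ (Fin m)) {r : ℝ} (hr : r ≠ 0) :
    HasCompactSupport (fun z : EuclideanSpace ℝ (Fin m) => χ (r⁻¹ • (z - z₀))) := by
  have := hχsupp.comp_homeomorph
    ((Homeomorph.subRight z₀).trans (Homeomorph.smulOfNeZero (r⁻¹ : ℝ) (inv_ne_zero hr)))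
  exact this

lemma aux_cont {χ : EuclideanSpace ℝ (Fin m) → ℝ} (hχ : Continuous χ)
    (z₀ : EuclideanSpace ℝ (Fin m)) (r : ℝ) :
    Continuous (fun z : EuclideanSpace ℝ (Fin m) => χ (r⁻¹ • (z - z₀))) :=
  by fun_prop

end Aux

/-- mollified Lebesgue differentiation at a point with approximate tangent
measure: ∫ (χ_r/σ(z₀)) W dμ → W(z₀) as r → 0⁺, where χ_r(z) = r^{−n} χ((z−z₀)/r) and χ
is a smooth radially symmetric bump whose integral over every n-plane through the origin
is 1. -/
theorem stmt14 {m n : ℕ}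
    (μ : Measure (EuclideanSpace ℝ (Fin m))) [IsFiniteMeasureOnCompacts μ]
    (z₀ : EuclideanSpace ℝ (Fin m)) (σ₀ : ℝ) (hσ₀ : 0 < σ₀)
    (Plane : Submodule ℝ (EuclideanSpace ℝ (Fin m))) (hPlane : Module.finrank ℝ Plane = n)
    (htan : ∀ φ : EuclideanSpace ℝ (Fin m) → ℝ, Continuous φ → HasCompactSupport φ →
      Tendsto (fun r : ℝ => (∫ z, φ (r⁻¹ • (z - z₀)) ∂μ) / r ^ n)
        (𝓝[>] 0)
        (𝓝 (σ₀ * ∫ w in (Plane : Set (EuclideanSpace ℝ (Fin m))), φ w ∂μH[(n : ℝ)])))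
    (W : EuclideanSpace ℝ (Fin m) → ℝ) (hWloc : LocallyIntegrable W μ)
    -- z₀ is a Lebesgue point of W :
    (hLeb : Tendsto (fun r : ℝ =>
        (∫ z in Metric.ball z₀ r, |W z - W z₀| ∂μ) / (μ (Metric.ball z₀ r)).toReal)
      (𝓝[>] 0) (𝓝 0))
    (χ : EuclideanSpace ℝ (Fin m) → ℝ)
    (hχsmooth : ContDiff ℝ (⊤ : ℕ∞) χ) (hχsupp : HasCompactSupport χ)
    (hχrad : ∀ z z' : EuclideanSpace ℝ (Fin m), ‖z‖ = ‖z'‖ → χ z = χ z')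
    (hχplanes : ∀ P : Submodule ℝ (EuclideanSpace ℝ (Fin m)), Module.finrank ℝ P = n →
      ∫ w in (P : Set (EuclideanSpace ℝ (Fin m))), χ w ∂μH[(n : ℝ)] = 1) :
    Tendsto (fun r : ℝ =>
        ∫ z, (χ (r⁻¹ • (z - z₀)) / (r ^ n * σ₀)) * W z ∂μ)
      (𝓝[>] 0) (𝓝 (W z₀)) := by
  classical
  have hχcont : Continuous χ := hχsmooth.continuous
  -- radius bound for the support of χ
  obtain ⟨R₀, hR₀⟩ := hχsupp.isBounded.subset_closedBall 0
  set R' : ℝ := max R₀ 0 with hR'def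
  have hsuppR' : tsupport χ ⊆ closedBall 0 R' :=
    hR₀.trans (closedBall_subset_closedBall (le_max_left _ _))
  set R1 : ℝ := R' + 1 with hR1def
  have hR1pos : 0 < R1 := by positivity
  have hχzero : ∀ z : EuclideanSpace ℝ (Fin m), R' < ‖z‖ → χ z = 0 := by
    intro z hz
    apply image_eq_zero_of_notMem_tsupport
    intro hmem
    have := hsuppR' hmem
    simp only [mem_closedBall, dist_zero_right] at this
    linarith
  -- the cutoff function ψ
  set ψ : EuclideanSpace ℝ (Fin m) → ℝ := fun z => max 0 (min 1 (R1 + 1 - ‖z‖)) with hψdef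
  have hψcont : Continuous ψ :=
    continuous_const.max (continuous_const.min (continuous_const.sub continuous_norm))
  have hψnonneg : ∀ z, 0 ≤ ψ z := fun z => le_max_left _ _
  have hψone : ∀ z : EuclideanSpace ℝ (Fin m), ‖z‖ ≤ R1 → ψ z = 1 := by
    intro z hz
    have h1 : (1 : ℝ) ≤ R1 + 1 - ‖z‖ := by linarith
    simp [hψdef, min_eq_left h1]
  have hψsupp : HasCompactSupport ψ := by
    apply HasCompactSupport.intro (isCompact_closedBall (0 : EuclideanSpace ℝ (Fin m)) (R1 + 1))
    intro z hz
    simp only [mem_closedBall, dist_zero_right, not_le] at hz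
    have h1 : R1 + 1 - ‖z‖ < 0 := by linarith
    have : min 1 (R1 + 1 - ‖z‖) ≤ R1 + 1 - ‖z‖ := min_le_right _ _
    simp only [hψdef]
    rw [max_eq_left]
    linarith
  -- bound for χ
  obtain ⟨C, hC⟩ := hχsupp.exists_bound_of_continuous hχcont
  have hC0 : 0 ≤ C := le_trans (norm_nonneg _) (hC z₀)
  have hCabs : ∀ z, |χ z| ≤ C := by simpa [Real.norm_eq_abs] using hC
  -- limits from htan
  have ha : Tendsto (fun r : ℝ => (∫ z, χ (r⁻¹ • (z - z₀)) ∂μ) / r ^ n)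
      (𝓝[>] 0) (𝓝 σ₀) := by
    have := htan χ hχcont hχsupp
    rwa [hχplanes Plane hPlane, mul_one] at this
  have hb : Tendsto (fun r : ℝ => (∫ z, ψ (r⁻¹ • (z - z₀)) ∂μ) / r ^ n)
      (𝓝[>] 0) (𝓝 (σ₀ * ∫ w in (Plane : Set (EuclideanSpace ℝ (Fin m))), ψ w ∂μH[(n : ℝ)])) :=
    htan ψ hψcont hψsupp
  set Lψ : ℝ := σ₀ * ∫ w in (Plane : Set (EuclideanSpace ℝ (Fin m))), ψ w ∂μH[(n : ℝ)]
  -- scaling of the Lebesgue point condition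
  have hscale : Tendsto (fun r : ℝ => R1 * r) (𝓝[>] 0) (𝓝[>] 0) := by
    rw [tendsto_nhdsWithin_iff]
    constructor
    · have : Tendsto (fun r : ℝ => R1 * r) (𝓝 0) (𝓝 (R1 * 0)) :=
        (continuous_const.mul continuous_id).tendsto 0
      simpa using this.mono_left nhdsWithin_le_nhds
    · filter_upwards [self_mem_nhdsWithin] with r hr
      exact mul_pos hR1pos hr
  have hL : Tendsto (fun r : ℝ =>
      (∫ z in Metric.ball z₀ (R1 * r), |W z - W z₀| ∂μ)
        / (μ (Metric.ball z₀ (R1 * r))).toReal) (𝓝[>] 0) (𝓝 0) := hLeb.comp hscale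
  -- the error term and its majorant
  set g : ℝ → ℝ := fun r =>
    (∫ z, χ (r⁻¹ • (z - z₀)) * (W z - W z₀) ∂μ) / (r ^ n * σ₀) with hgdef
  set h : ℝ → ℝ := fun r =>
    (C / σ₀) * ((∫ z in Metric.ball z₀ (R1 * r), |W z - W z₀| ∂μ)
        / (μ (Metric.ball z₀ (R1 * r))).toReal)
      * ((∫ z, ψ (r⁻¹ • (z - z₀)) ∂μ) / r ^ n) with hhdef
  have hh0 : Tendsto h (𝓝[>] 0) (𝓝 0) := by
    have := ((tendsto_const_nhds (x := C / σ₀)).mul hL).mul hb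
    simpa using this
  -- pointwise facts for fixed r > 0
  have key : ∀ r : ℝ, 0 < r →
      (|g r| ≤ h r ∧
        (∫ z, (χ (r⁻¹ • (z - z₀)) / (r ^ n * σ₀)) * W z ∂μ)
          = (W z₀ / σ₀) * ((∫ z, χ (r⁻¹ • (z - z₀)) ∂μ) / r ^ n) + g r) := by
    intro r hr
    have hrn : (0 : ℝ) < r ^ n := pow_pos hr n
    have hrn0 : (r : ℝ) ^ n ≠ 0 := ne_of_gt hrn
    have hσ0 : σ₀ ≠ 0 := ne_of_gt hσ₀
    set χr : EuclideanSpace ℝ (Fin m) → ℝ := fun z => χ (r⁻¹ • (z - z₀)) with hχrdef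
    have hχrcont : Continuous χr := aux_cont hχcont z₀ r
    have hχrsupp : HasCompactSupport χr := aux_hcs hχsupp z₀ hr.ne'
    have hI1 : Integrable χr μ := hχrcont.integrable_of_hasCompactSupport hχrsupp
    have hI2 : Integrable (fun z => χr z * W z) μ := by
      simpa [smul_eq_mul] using
        hWloc.integrable_smul_left_of_hasCompactSupport hχrcont hχrsupp
    have hI3 : Integrable (fun z => χr z * (W z - W z₀)) μ := by
      have := hI2.sub (hI1.mul_const (W z₀))
      simpa [mul_sub, Pi.sub_def] using this
    -- χr vanishes outside the ball of radius R1 * r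
    have hvanish : ∀ z : EuclideanSpace ℝ (Fin m),
        z ∉ Metric.ball z₀ (R1 * r) → χr z = 0 := by
      intro z hz
      simp only [mem_ball, dist_eq_norm, not_lt] at hz
      apply hχzero
      rw [norm_smul, Real.norm_eq_abs, abs_of_pos (inv_pos.2 hr)]
      rw [← sub_pos]
      have : r⁻¹ * (R1 * r) ≤ r⁻¹ * ‖z - z₀‖ :=
        mul_le_mul_of_nonneg_left hz (le_of_lt (inv_pos.2 hr))
      rw [show r⁻¹ * (R1 * r) = R1 by field_simp] at this
      simp only [hR1def] at this
      linarith
    set B : Set (EuclideanSpace ℝ (Fin m)) := Metric.ball z₀ (R1 * r) with hBdef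
    have hμBfin : μ B < ∞ :=
      lt_of_le_of_lt (measure_mono ball_subset_closedBall)
        (isCompact_closedBall z₀ (R1 * r)).measure_lt_top
    have hIW' : IntegrableOn (fun z => |W z - W z₀|) B μ := by
      have h1 : IntegrableOn W B μ :=
        (hWloc.integrableOn_isCompact (isCompact_closedBall z₀ (R1 * r))).mono_set
          ball_subset_closedBall
      have h2 : IntegrableOn (fun _ => W z₀) B μ := integrableOn_const hμBfin.ne
      exact (h1.sub h2).abs
    have hAnonneg : 0 ≤ ∫ z in B, |W z - W z₀| ∂μ :=
      setIntegral_nonneg measurableSet_ball (fun z _ => abs_nonneg _)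
    -- bound the numerator of g r
    have hnum : |∫ z, χr z * (W z - W z₀) ∂μ| ≤ C * ∫ z in B, |W z - W z₀| ∂μ := by
      have hI3abs : Integrable (fun z => |χr z| * |W z - W z₀|) μ := by
        simpa [abs_mul] using hI3.abs
      calc |∫ z, χr z * (W z - W z₀) ∂μ| ≤ ∫ z, |χr z| * |W z - W z₀| ∂μ := by
            simpa [Real.norm_eq_abs] using
              norm_integral_le_integral_norm (μ := μ) (fun z => χr z * (W z - W z₀))
        _ = ∫ z in B, |χr z| * |W z - W z₀| ∂μ := by
            rw [setIntegral_eq_integral_of_forall_compl_eq_zero]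
            intro z hz
            rw [hvanish z hz, abs_zero, zero_mul]
        _ ≤ ∫ z in B, C * |W z - W z₀| ∂μ := by
            apply setIntegral_mono_on (hI3abs.integrableOn) (hIW'.const_mul C)
              measurableSet_ball
            intro z _
            exact mul_le_mul_of_nonneg_right (hCabs _) (abs_nonneg _)
        _ = C * ∫ z in B, |W z - W z₀| ∂μ := by rw [integral_const_mul]
    -- μ B is dominated by the ψ integral
    have hψr : Integrable (fun z => ψ (r⁻¹ • (z - z₀))) μ :=
      (aux_cont hψcont z₀ r).integrable_of_hasCompactSupport (aux_hcs hψsupp z₀ hr.ne')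
    have hMle : (μ B).toReal ≤ ∫ z, ψ (r⁻¹ • (z - z₀)) ∂μ := by
      have hind : Integrable (B.indicator (fun _ => (1 : ℝ))) μ := by
        rw [integrable_indicator_iff measurableSet_ball]
        exact integrableOn_const hμBfin.ne
      have hle : ∀ z, B.indicator (fun _ => (1 : ℝ)) z ≤ ψ (r⁻¹ • (z - z₀)) := by
        intro z
        by_cases hz : z ∈ B
        · rw [Set.indicator_of_mem hz]
          rw [hψone]
          rw [norm_smul, Real.norm_eq_abs, abs_of_pos (inv_pos.2 hr)]
          simp only [hBdef, mem_ball, dist_eq_norm] at hz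
          rw [inv_mul_le_iff₀ hr, mul_comm]
          exact le_of_lt hz
        · rw [Set.indicator_of_notMem hz]
          exact hψnonneg _
      calc (μ B).toReal = ∫ z, B.indicator (fun _ => (1 : ℝ)) z ∂μ := by
            rw [integral_indicator measurableSet_ball]; simp; rfl
        _ ≤ ∫ z, ψ (r⁻¹ • (z - z₀)) ∂μ := integral_mono hind hψr hle
    have hψnn : 0 ≤ ∫ z, ψ (r⁻¹ • (z - z₀)) ∂μ :=
      integral_nonneg (fun z => hψnonneg _)
    -- the squeeze inequality
    have hAb : (∫ z in B, |W z - W z₀| ∂μ) / r ^ n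
        ≤ ((∫ z in B, |W z - W z₀| ∂μ) / (μ B).toReal)
          * ((∫ z, ψ (r⁻¹ • (z - z₀)) ∂μ) / r ^ n) := by
      set A := ∫ z in B, |W z - W z₀| ∂μ
      set M := (μ B).toReal
      by_cases hM : M = 0
      · have hA0 : A = 0 := by
          have hμB0 : μ B = 0 := by
            have := ENNReal.toReal_eq_zero_iff (μ B)
            rcases this.1 hM with h | h
            · exact h
            · exact absurd h (ne_of_lt hμBfin)
          simp only [A, hBdef]
          rw [Measure.restrict_eq_zero.2 hμB0]
          exact integral_zero_measure _
        rw [hA0]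
        simp
      · have hMpos : 0 < M := lt_of_le_of_ne ENNReal.toReal_nonneg (Ne.symm hM)
        have h1 : M / r ^ n ≤ (∫ z, ψ (r⁻¹ • (z - z₀)) ∂μ) / r ^ n := by gcongr
        calc A / r ^ n = (A / M) * (M / r ^ n) := by field_simp
          _ ≤ (A / M) * ((∫ z, ψ (r⁻¹ • (z - z₀)) ∂μ) / r ^ n) :=
            mul_le_mul_of_nonneg_left h1 (div_nonneg hAnonneg (le_of_lt hMpos))
    constructor
    · -- |g r| ≤ h r
      have : |g r| = |∫ z, χr z * (W z - W z₀) ∂μ| / (r ^ n * σ₀) := by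
        rw [hgdef, abs_div, abs_of_pos (mul_pos hrn hσ₀)]
      rw [this]
      calc |∫ z, χr z * (W z - W z₀) ∂μ| / (r ^ n * σ₀)
          ≤ (C * ∫ z in B, |W z - W z₀| ∂μ) / (r ^ n * σ₀) := by
            gcongr
        _ = (C / σ₀) * ((∫ z in B, |W z - W z₀| ∂μ) / r ^ n) := by
            simp only [div_eq_mul_inv, mul_inv]; ring
        _ ≤ (C / σ₀) * (((∫ z in B, |W z - W z₀| ∂μ) / (μ B).toReal)
              * ((∫ z, ψ (r⁻¹ • (z - z₀)) ∂μ) / r ^ n)) :=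
            mul_le_mul_of_nonneg_left hAb (div_nonneg hC0 (le_of_lt hσ₀))
        _ = h r := by rw [hhdef]; ring
    · -- decomposition of the main integral
      have step1 : (∫ z, (χr z / (r ^ n * σ₀)) * W z ∂μ)
          = (r ^ n * σ₀)⁻¹ * ∫ z, χr z * W z ∂μ := by
        rw [← integral_const_mul]
        congr 1
        ext z
        field_simp
      have step2 : (∫ z, χr z * W z ∂μ)
          = (∫ z, χr z * (W z - W z₀) ∂μ) + W z₀ * ∫ z, χr z ∂μ := by
        rw [← integral_const_mul]
        rw [← integral_add hI3 (hI1.const_mul (W z₀))]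
        congr 1
        ext z
        ring
      rw [step1, step2, hgdef]
      simp only [div_eq_mul_inv, mul_inv]
      ring
  -- assemble
  have hg0 : Tendsto g (𝓝[>] 0) (𝓝 0) := by
    apply squeeze_zero_norm' _ hh0
    filter_upwards [self_mem_nhdsWithin] with r hr
    simpa [Real.norm_eq_abs] using (key r hr).1
  have hmain : Tendsto (fun r : ℝ =>
      (W z₀ / σ₀) * ((∫ z, χ (r⁻¹ • (z - z₀)) ∂μ) / r ^ n) + g r)
      (𝓝[>] 0) (𝓝 (W z₀)) := by
    have := ((tendsto_const_nhds (x := W z₀ / σ₀)).mul ha).add hg0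
    have heq : W z₀ / σ₀ * σ₀ + 0 = W z₀ := by field_simp; simp
    rwa [heq] at this
  apply hmain.congr'
  filter_upwards [self_mem_nhdsWithin] with r hr
  exact ((key r hr).2).symm
end

section
/- Let S ⊆ ℝ^{n+1} be a smooth hypersurface whose mean curvature h_S vanishes only to finite order at each point of S (i.e., for each p ∈ S some derivative of h_S along S is nonzero at p). If Z ⊆ S is ℋⁿ-measurable with h_S = 0 on Z, then ℋⁿ(Z) = 0. -/
open MeasureTheory Metric
open scoped ENNReal NNReal

open Filter Set
open scoped Topology Pointwise


/-- At a Lebesgue density point of a set on which a differentiable function vanishes,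
the derivative vanishes as well. -/
theorem fderiv_eq_zero_of_density {E : Type*} [NormedAddCommGroup E] [NormedSpace ℝ E]
    [MeasurableSpace E] [BorelSpace E] [FiniteDimensional ℝ E]
    (μ : Measure E) [μ.IsAddHaarMeasure]
    {F : Type*} [NormedAddCommGroup F] [NormedSpace ℝ F]
    {g : E → F} {u : Set E} (hg0 : ∀ y ∈ u, g y = 0) {x : E} (hx : x ∈ u)
    (hgd : DifferentiableAt ℝ g x)
    (hdens : Filter.Tendsto (fun r => μ (u ∩ closedBall x r) / μ (closedBall x r))
      (nhdsWithin 0 (Set.Ioi 0)) (nhds 1)) :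
    fderiv ℝ g x = 0 := by
  by_contra hL
  set L := fderiv ℝ g x with hLdef
  obtain ⟨v, hv⟩ : ∃ v, L v ≠ 0 := by
    by_contra hall
    push_neg at hall
    exact hL (ContinuousLinearMap.ext fun w => by simp [hall w])
  have hvne : v ≠ 0 := fun h => hv (by simp [h])
  set e : E := ‖v‖⁻¹ • v with he
  have hene : ‖e‖ = 1 := by
    simp [he, norm_smul, abs_of_nonneg, inv_mul_cancel₀ (norm_ne_zero_iff.2 hvne)]
  have hLe : L e ≠ 0 := by
    have h1 : L e = ‖v‖⁻¹ • L v := L.map_smul _ _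
    rw [h1]
    exact smul_ne_zero (inv_ne_zero (norm_ne_zero_iff.2 hvne)) hv
  set c : ℝ := ‖L e‖ with hc
  have hcpos : 0 < c := norm_pos_iff.2 hLe
  set C : Set E := {w | ‖L w‖ ≤ c / 2 * ‖w‖} with hC
  have hmemC : ∀ w : E, w ∈ C ↔ ‖L w‖ ≤ c / 2 * ‖w‖ := fun w => Iff.rfl
  have hCsmul : ∀ (a : ℝ) (w : E), w ∈ C → a • w ∈ C := by
    intro a w hw
    rw [hmemC] at *
    rw [L.map_smul, norm_smul, norm_smul]
    calc ‖a‖ * ‖L w‖ ≤ ‖a‖ * (c / 2 * ‖w‖) := by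
          have := norm_nonneg a; gcongr
      _ = c / 2 * (‖a‖ * ‖w‖) := by ring
  -- the little-o estimate
  have hlo : (fun w => g w - g x - L (w - x)) =o[nhds x] fun w => w - x :=
    hgd.hasFDerivAt.isLittleO
  have hev : ∀ᶠ w in nhds x, ‖g w - g x - L (w - x)‖ ≤ c / 2 * ‖w - x‖ :=
    hlo.def (by positivity)
  obtain ⟨δ, hδpos, hδ⟩ := Metric.eventually_nhds_iff.1 hev
  have hgx : g x = 0 := hg0 x hx
  -- For small r, u ∩ closedBall x r ⊆ x +ᵥ (C ∩ closedBall 0 r)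
  have hsub : ∀ r : ℝ, 0 < r → r < δ → u ∩ closedBall x r ⊆ x +ᵥ (C ∩ closedBall 0 r) := by
    intro r hr hrδ w ⟨hwu, hwb⟩
    rw [Set.mem_vadd_set_iff_neg_vadd_mem]
    have hdist : dist w x < δ := lt_of_le_of_lt (mem_closedBall.1 hwb) hrδ
    have h1 := hδ hdist
    rw [hg0 w hwu, hgx, sub_zero, zero_sub, norm_neg] at h1
    have h2 : (-x) +ᵥ w = w - x := by
      simp [vadd_eq_add, neg_add_eq_sub]
    rw [h2]
    constructor
    · exact (hmemC _).2 h1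
    · rw [mem_closedBall_zero_iff, ← dist_eq_norm]
      exact mem_closedBall.1 hwb
  -- scaling of the cone
  have hcone : ∀ r : ℝ, 0 < r → C ∩ closedBall 0 r = r • (C ∩ closedBall 0 1) := by
    intro r hr
    ext w
    rw [Set.mem_smul_set_iff_inv_smul_mem₀ hr.ne']
    have hnorm : ‖r⁻¹ • w‖ = r⁻¹ * ‖w‖ := by
      rw [norm_smul, norm_inv, Real.norm_eq_abs, abs_of_pos hr]
    constructor
    · rintro ⟨hwC, hwb⟩
      refine ⟨hCsmul _ _ hwC, ?_⟩
      rw [mem_closedBall_zero_iff, hnorm]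
      rw [mem_closedBall_zero_iff] at hwb
      calc r⁻¹ * ‖w‖ ≤ r⁻¹ * r := by gcongr
        _ = 1 := inv_mul_cancel₀ hr.ne'
    · rintro ⟨hwC, hwb⟩
      have hw : w = r • (r⁻¹ • w) := (smul_inv_smul₀ hr.ne' w).symm
      constructor
      · rw [hw]; exact hCsmul _ _ hwC
      · rw [mem_closedBall_zero_iff] at hwb ⊢
        rw [hnorm] at hwb
        have : ‖w‖ ≤ r * 1 := by
          rw [← inv_mul_le_iff₀ hr] at *; simpa using hwb
        linarith
  -- the cone has density < 1
  set d := Module.finrank ℝ E with hd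
  set θ : ℝ≥0∞ := μ (C ∩ closedBall 0 1) / μ (closedBall (0:E) 1) with hθ
  have hBpos : 0 < μ (closedBall (0:E) 1) := measure_closedBall_pos μ 0 one_pos
  have hBfin : μ (closedBall (0:E) 1) < ⊤ := measure_closedBall_lt_top
  have hθlt : θ < 1 := by
    set U : Set E := {w | c / 2 * ‖w‖ < ‖L w‖} ∩ ball 0 1 with hU
    have hUopen : IsOpen U :=
      (isOpen_lt (continuous_const.mul continuous_norm) L.continuous.norm).inter isOpen_ball
    have hUne : U.Nonempty := by
      refine ⟨(2:ℝ)⁻¹ • e, ?_, ?_⟩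
      · show c / 2 * ‖(2:ℝ)⁻¹ • e‖ < ‖L ((2:ℝ)⁻¹ • e)‖
        have h1 : ‖L ((2:ℝ)⁻¹ • e)‖ = 2⁻¹ * c := by
          rw [L.map_smul, norm_smul, ← hc]; norm_num
        have h2 : ‖((2:ℝ)⁻¹ • e : E)‖ = 2⁻¹ := by
          rw [norm_smul, hene]; norm_num
        rw [h1, h2]; nlinarith [hcpos]
      · have h2 : ‖((2:ℝ)⁻¹ • e : E)‖ = 2⁻¹ := by
          rw [norm_smul, hene]; norm_num
        rw [mem_ball_zero_iff, h2]; norm_num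
    have hUpos : 0 < μ U := hUopen.measure_pos μ hUne
    have hdisj : Disjoint (C ∩ closedBall 0 1) U := by
      rw [Set.disjoint_left]
      rintro w ⟨hwC, _⟩ ⟨hwU, _⟩
      exact (not_le.2 (show c / 2 * ‖w‖ < ‖L w‖ from hwU)) ((hmemC w).1 hwC)
    have hsum : μ (C ∩ closedBall 0 1) + μ U ≤ μ (closedBall (0:E) 1) := by
      rw [← measure_union hdisj hUopen.measurableSet]
      refine measure_mono (Set.union_subset Set.inter_subset_right ?_)
      exact Set.inter_subset_right.trans ball_subset_closedBall
    have hlt : μ (C ∩ closedBall 0 1) < μ (closedBall (0:E) 1) := by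
      calc μ (C ∩ closedBall 0 1) < μ (C ∩ closedBall 0 1) + μ U :=
            ENNReal.lt_add_right (lt_of_le_of_lt (measure_mono Set.inter_subset_right) hBfin).ne
              hUpos.ne'
        _ ≤ μ (closedBall (0:E) 1) := hsum
    rw [hθ, ENNReal.div_lt_iff (Or.inl hBpos.ne') (Or.inl hBfin.ne), one_mul]
    exact hlt
  -- eventually the density ratio is ≤ θ
  have hevr : ∀ᶠ r in nhdsWithin (0:ℝ) (Set.Ioi 0),
      μ (u ∩ closedBall x r) / μ (closedBall x r) ≤ θ := by
    filter_upwards [Ioo_mem_nhdsGT_of_mem ⟨le_refl (0:ℝ), hδpos⟩] with r hr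
    obtain ⟨hr0, hrδ⟩ := hr
    have h1 : μ (u ∩ closedBall x r) ≤ μ (C ∩ closedBall 0 r) := by
      calc μ (u ∩ closedBall x r) ≤ μ (x +ᵥ (C ∩ closedBall 0 r)) :=
            measure_mono (hsub r hr0 hrδ)
        _ = μ (C ∩ closedBall 0 r) := measure_vadd _ _ _
    have h2 : μ (C ∩ closedBall 0 r) = ENNReal.ofReal (r ^ d) * μ (C ∩ closedBall 0 1) := by
      rw [hcone r hr0, Measure.addHaar_smul, abs_of_pos (pow_pos hr0 d)]
    have h3 : μ (closedBall x r) = ENNReal.ofReal (r ^ d) * μ (closedBall (0:E) 1) :=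
      Measure.addHaar_closedBall' μ x hr0.le
    have hrd0 : ENNReal.ofReal (r ^ d) ≠ 0 := by
      simp [ENNReal.ofReal_eq_zero, not_le, pow_pos hr0 d]
    have hrdt : ENNReal.ofReal (r ^ d) ≠ ⊤ := ENNReal.ofReal_ne_top
    calc μ (u ∩ closedBall x r) / μ (closedBall x r)
        ≤ (ENNReal.ofReal (r ^ d) * μ (C ∩ closedBall 0 1)) /
          (ENNReal.ofReal (r ^ d) * μ (closedBall (0:E) 1)) := by
          rw [← h2, ← h3]; exact ENNReal.div_le_div_right h1 _
      _ = θ := by rw [hθ, ENNReal.mul_div_mul_left _ _ hrd0 hrdt]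
  have hfin : (1:ℝ≥0∞) ≤ θ := le_of_tendsto hdens hevr
  exact absurd hfin (not_le.2 hθlt)

/-- The zero set of a smooth function vanishing only to finite order is Lebesgue-null. -/
theorem volume_zeroSet_eq_zero {n : ℕ} {f : EuclideanSpace ℝ (Fin n) → ℝ}
    (hf : ContDiff ℝ (⊤ : ℕ∞) f) (hfin : ∀ y, ∃ k : ℕ, iteratedFDeriv ℝ k f y ≠ 0) :
    volume {y | f y = 0} = 0 := by
  classical
  set μ : Measure (EuclideanSpace ℝ (Fin n)) := volume with hμ
  set s : Set (EuclideanSpace ℝ (Fin n)) := {y | f y = 0} with hs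
  have hsmeas : MeasurableSet s := (isClosed_eq hf.continuous continuous_const).measurableSet
  set A : ℕ → Set (EuclideanSpace ℝ (Fin n)) :=
    fun k => s ∩ {y | iteratedFDeriv ℝ k f y = 0} with hA
  have hAmeas : ∀ k, MeasurableSet (A k) := fun k =>
    hsmeas.inter
      (isClosed_eq (hf.continuous_iteratedFDeriv (by exact_mod_cast le_top)) continuous_const).measurableSet
  have hA0 : A 0 = s := by
    apply Set.inter_eq_self_of_subset_left
    intro y hy
    show iteratedFDeriv ℝ 0 f y = 0
    rw [← norm_eq_zero, norm_iteratedFDeriv_zero, show f y = 0 from hy, norm_zero]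
  have hclaim : ∀ k, μ (s \ A k) = 0 := by
    intro k
    induction k with
    | zero => rw [hA0]; simp
    | succ k ih =>
      have hstep : μ (A k \ A (k + 1)) = 0 := by
        have hae : ∀ᵐ x ∂μ.restrict (A k), x ∈ A (k + 1) := by
          filter_upwards [ae_restrict_mem (hAmeas k),
            Besicovitch.ae_tendsto_measure_inter_div μ (A k)] with x hxmem hxdens
          have hdiff : DifferentiableAt ℝ (iteratedFDeriv ℝ k f) x :=
            (hf.differentiable_iteratedFDeriv (m := k)
              (by exact_mod_cast ENat.coe_lt_top k)) x
          have h0 : ∀ y ∈ A k, iteratedFDeriv ℝ k f y = 0 := fun y hy => hy.2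
          have hfd : fderiv ℝ (iteratedFDeriv ℝ k f) x = 0 :=
            fderiv_eq_zero_of_density μ h0 hxmem hdiff hxdens
          refine ⟨hxmem.1, ?_⟩
          show iteratedFDeriv ℝ (k + 1) f x = 0
          have hrw : iteratedFDeriv ℝ (k + 1) f x =
              (continuousMultilinearCurryLeftEquiv ℝ
                (fun _ : Fin (k + 1) => EuclideanSpace ℝ (Fin n)) ℝ).symm
                (fderiv ℝ (iteratedFDeriv ℝ k f) x) :=
            congrFun iteratedFDeriv_succ_eq_comp_left x
          rw [hrw, hfd]
          exact LinearIsometryEquiv.map_zero _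
        have := (ae_iff.1 hae)
        rw [Measure.restrict_apply₀' (hAmeas k).nullMeasurableSet] at this
        refine measure_mono_null ?_ this
        intro x hx
        exact ⟨hx.2, hx.1⟩
      have hsub : s \ A (k + 1) ⊆ (s \ A k) ∪ (A k \ A (k + 1)) := by
        intro x hx
        by_cases hxk : x ∈ A k
        · exact Or.inr ⟨hxk, hx.2⟩
        · exact Or.inl ⟨hx.1, hxk⟩
      exact measure_mono_null hsub (by
        rw [← le_zero_iff]
        calc μ ((s \ A k) ∪ (A k \ A (k + 1))) ≤ μ (s \ A k) + μ (A k \ A (k + 1)) :=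
              measure_union_le _ _
          _ = 0 := by rw [ih, hstep, add_zero])
  have hcover : s ⊆ ⋃ k : ℕ, s \ A k := by
    intro y hy
    obtain ⟨k, hk⟩ := hfin y
    exact Set.mem_iUnion.2 ⟨k, hy, fun hmem => hk hmem.2⟩
  exact measure_mono_null hcover (measure_iUnion_null hclaim)

/-- Volume-null sets in Euclidean space are null for the `n`-dimensional Hausdorff measure. -/
theorem hausdorff_null_of_volume_null {n : ℕ} {s : Set (EuclideanSpace ℝ (Fin n))}
    (hs : volume s = 0) : μH[(n : ℝ)] s = 0 := by
  classical
  set F := WithLp.equiv 2 (Fin n → ℝ) with hF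
  -- transport volume-nullity to the pi space
  have hpi_vol : volume (F '' s) = 0 := by
    set t := toMeasurable volume s with ht
    have htmeas : MeasurableSet t := measurableSet_toMeasurable _ _
    have htnull : volume t = 0 := by rw [ht, measure_toMeasurable]; exact hs
    have hsub : F '' s ⊆ (MeasurableEquiv.toLp 2 (Fin n → ℝ)).symm.symm ⁻¹' t := by
      rintro _ ⟨y, hy, rfl⟩
      have : (MeasurableEquiv.toLp 2 (Fin n → ℝ)).symm.symm (F y) = y := rfl
      simp only [Set.mem_preimage, this]
      exact subset_toMeasurable _ _ hy
    refine measure_mono_null hsub ?_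
    rw [(MeasurePreserving.symm _
      (EuclideanSpace.volume_preserving_symm_measurableEquiv_toLp (Fin n))).measure_preimage
      htmeas.nullMeasurableSet]
    exact htnull
  -- Hausdorff measure equals volume on the pi space
  have hpi_haus : μH[(n : ℝ)] (F '' s) = 0 := by
    have : (μH[(n : ℝ)] : Measure (Fin n → ℝ)) = volume := by
      have := MeasureTheory.hausdorffMeasure_pi_real (ι := Fin n)
      rwa [Fintype.card_fin] at this
    rw [this]; exact hpi_vol
  -- pull back via the Lipschitz inverse
  obtain ⟨K, hK⟩ : ∃ K : ℝ≥0, LipschitzWith K (F.symm : (Fin n → ℝ) → EuclideanSpace ℝ (Fin n)) := by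
    exact ⟨_, PiLp.lipschitzWith_toLp 2 (fun _ : Fin n => ℝ)⟩
  have himg : s = F.symm '' (F '' s) := by
    rw [Set.image_image]
    simp
  rw [← le_zero_iff]
  calc μH[(n : ℝ)] s = μH[(n : ℝ)] (F.symm '' (F '' s)) := by rw [← himg]
    _ ≤ (K : ℝ≥0∞) ^ (n : ℝ) * μH[(n : ℝ)] (F '' s) :=
        hK.hausdorffMeasure_image_le (Nat.cast_nonneg n) _
    _ = 0 := by rw [hpi_haus, mul_zero]

/-- if S is a smooth hypersurface in ℝ^{n+1} (covered near each of its
points by smooth Lipschitz parametrizations) and h (e.g. the mean curvature h_S)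
vanishes only to finite order at each point of S (some iterated derivative of h along
each parametrization is nonzero at every parameter point), then any ℋⁿ-measurable
subset Z ⊆ S on which h vanishes has ℋⁿ(Z) = 0. -/
theorem stmt18 {n : ℕ}
    (S : Set (EuclideanSpace ℝ (Fin (n + 1))))
    (h : EuclideanSpace ℝ (Fin (n + 1)) → ℝ) (hsmooth : ContDiff ℝ (⊤ : ℕ∞) h)
    (hcover : ∀ p ∈ S, ∃ ε > 0, ∃ (K : NNReal)
      (ψ : EuclideanSpace ℝ (Fin n) → EuclideanSpace ℝ (Fin (n + 1))),
      ContDiff ℝ (⊤ : ℕ∞) ψ ∧ LipschitzWith K ψ ∧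
      (∀ y, ψ y ∈ S) ∧
      S ∩ Metric.ball p ε ⊆ Set.range ψ ∧
      -- h vanishes only to finite order along ψ :
      (∀ y : EuclideanSpace ℝ (Fin n), ∃ k : ℕ, iteratedFDeriv ℝ k (h ∘ ψ) y ≠ 0))
    (Z : Set (EuclideanSpace ℝ (Fin (n + 1)))) (hZS : Z ⊆ S)
    (hZmeas : MeasurableSet Z) (hZzero : ∀ z ∈ Z, h z = 0) :
    μH[(n : ℝ)] Z = 0 := by
  classical
  choose! ε hεpos K ψ hψsmooth hψlip hψS hψcover hψfin using hcover
  -- countable subcover of the open cover by balls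
  obtain ⟨T, hTc, hTeq⟩ := TopologicalSpace.isOpen_iUnion_countable
    (fun p : S => Metric.ball (p : EuclideanSpace ℝ (Fin (n + 1))) (ε p))
    (fun _ => Metric.isOpen_ball)
  have hZcov : Z ⊆ ⋃ p ∈ T, Z ∩ Metric.ball (p : EuclideanSpace ℝ (Fin (n + 1))) (ε p) := by
    intro z hz
    have hzS : z ∈ S := hZS hz
    have : z ∈ ⋃ p : S, Metric.ball (p : EuclideanSpace ℝ (Fin (n + 1))) (ε p) :=
      Set.mem_iUnion.2 ⟨⟨z, hzS⟩, Metric.mem_ball_self (hεpos z hzS)⟩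
    rw [← hTeq] at this
    obtain ⟨p, hpT, hpb⟩ := Set.mem_iUnion₂.1 this
    exact Set.mem_iUnion₂.2 ⟨p, hpT, hz, hpb⟩
  refine measure_mono_null hZcov (measure_biUnion_null_iff hTc |>.2 ?_)
  rintro ⟨p, hpS⟩ -
  set q : EuclideanSpace ℝ (Fin (n + 1)) := p
  -- the piece is contained in the image of the zero set of h ∘ ψ
  set N : Set (EuclideanSpace ℝ (Fin n)) := {y | (h ∘ ψ p) y = 0} with hN
  have hsub : Z ∩ Metric.ball q (ε p) ⊆ ψ p '' N := by
    rintro z ⟨hzZ, hzb⟩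
    have hzS : z ∈ S := hZS hzZ
    obtain ⟨y, rfl⟩ := hψcover p hpS ⟨hzS, hzb⟩
    exact ⟨y, by simp [hN, Function.comp, hZzero _ hzZ], rfl⟩
  refine measure_mono_null hsub ?_
  have hvol : volume N = 0 :=
    volume_zeroSet_eq_zero ((hsmooth.comp (hψsmooth p hpS))) (hψfin p hpS)
  have hhaus : μH[(n : ℝ)] N = 0 := hausdorff_null_of_volume_null hvol
  rw [← le_zero_iff]
  calc μH[(n : ℝ)] (ψ p '' N) ≤ (K p : ℝ≥0∞) ^ (n : ℝ) * μH[(n : ℝ)] N :=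
        (hψlip p hpS).hausdorffMeasure_image_le (Nat.cast_nonneg n) _
    _ = 0 := by rw [hhaus, mul_zero]
end
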